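/- Let F be an algebraically closed field, β₁, α₈, β₈ ∈ F with β₁ ≠ 0 and α₈ ≠ 0, and e₁ = (1,0,0). Then for all integers k₁, k₂ ≥ 2 and every A ∈ O(F), there exist X, Y ∈ O(F) with A = (0, 0; 0, α₈)·X^{k₁} + (β₁, e₁; 0, β₈)·Y^{k₂}. -/

import Mathlib

/-- Zorn vector matrices: the split octonion algebra over `F`. -/
structure Oct (F : Type*) where
  a : F              -- upper-left scalar η
  b : Fin 3 → F      -- upper-right vector x
  c : Fin 3 → F      -- lower-left vector y
  d : F              -- lower-right scalar ζ

namespace Oct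

variable {F : Type*} [Field F]

/-- standard bilinear form on F^3 -/
def dot (x y : Fin 3 → F) : F := x 0 * y 0 + x 1 * y 1 + x 2 * y 2

/-- cross product on F^3, satisfying ⟨x ∧ y, z⟩ = det(x,y,z) -/
def cross (x y : Fin 3 → F) : Fin 3 → F :=
  ![x 1 * y 2 - x 2 * y 1, x 2 * y 0 - x 0 * y 2, x 0 * y 1 - x 1 * y 0]

instance : Add (Oct F) :=
  ⟨fun A B => ⟨A.a + B.a, A.b + B.b, A.c + B.c, A.d + B.d⟩⟩

instance : Mul (Oct F) :=
  ⟨fun A B =>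
    ⟨A.a * B.a + dot A.b B.c,
     A.a • B.b + B.d • A.b + cross A.c B.c,
     A.d • B.c + B.a • A.c + cross A.b B.b,
     A.d * B.d + dot A.c B.b⟩⟩

instance : SMul F (Oct F) :=
  ⟨fun t A => ⟨t * A.a, t • A.b, t • A.c, t * A.d⟩⟩

instance : One (Oct F) := ⟨⟨1, 0, 0, 1⟩⟩

/-- powers, via A^{n+1} = A · A^n (well-defined by power-associativity) -/
def pow (A : Oct F) : ℕ → Oct F
  | 0 => 1
  | n + 1 => A * pow A n

/-- octonion conjugation -/
def conj (A : Oct F) : Oct F := ⟨A.d, -A.b, -A.c, A.a⟩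

/-- the norm form -/
def norm (A : Oct F) : F := A.a * A.d - dot A.b A.c

end Oct

/-!
An octonion `Z` of norm zero satisfies `Z * Z = tr Z • Z`, hence `Z ^ (n + 1) = (tr Z) ^ n • Z`.
When `tr Z ≠ 0` and `F` is algebraically closed, a suitable scalar multiple of `Z` is therefore a
`k`-th root of `Z`. So it suffices to write `A = D * Z₁ + B * Z₂` with `Z₁`, `Z₂` of norm zero and
nonzero trace, where `D = (0, 0; 0, α₈)` and `B = (β₁, e₁; 0, β₈)`: left multiplication by `B`
reaches every top row `(η, x)` on such elements, and `D * Z₁` then fixes the bottom row `(y, ζ)`.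
-/

attribute [ext] Oct

namespace Oct

variable {F : Type*} [Field F]

def trace (A : Oct F) : F := A.a + A.d

@[simp] lemma mul_a (A B : Oct F) : (A * B).a = A.a * B.a + dot A.b B.c := rfl
@[simp] lemma mul_b (A B : Oct F) : (A * B).b = A.a • B.b + B.d • A.b + cross A.c B.c := rfl
@[simp] lemma mul_c (A B : Oct F) : (A * B).c = A.d • B.c + B.a • A.c + cross A.b B.b := rfl
@[simp] lemma mul_d (A B : Oct F) : (A * B).d = A.d * B.d + dot A.c B.b := rfl
@[simp] lemma add_a (A B : Oct F) : (A + B).a = A.a + B.a := rfl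
@[simp] lemma add_b (A B : Oct F) : (A + B).b = A.b + B.b := rfl
@[simp] lemma add_c (A B : Oct F) : (A + B).c = A.c + B.c := rfl
@[simp] lemma add_d (A B : Oct F) : (A + B).d = A.d + B.d := rfl
@[simp] lemma smul_a (t : F) (A : Oct F) : (t • A).a = t * A.a := rfl
@[simp] lemma smul_b (t : F) (A : Oct F) : (t • A).b = t • A.b := rfl
@[simp] lemma smul_c (t : F) (A : Oct F) : (t • A).c = t • A.c := rfl
@[simp] lemma smul_d (t : F) (A : Oct F) : (t • A).d = t * A.d := rfl
@[simp] lemma one_a : (1 : Oct F).a = 1 := rfl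
@[simp] lemma one_b : (1 : Oct F).b = 0 := rfl
@[simp] lemma one_c : (1 : Oct F).c = 0 := rfl
@[simp] lemma one_d : (1 : Oct F).d = 1 := rfl

@[simp] lemma dot_zero_left (y : Fin 3 → F) : dot 0 y = 0 := by simp [dot]
@[simp] lemma dot_zero_right (x : Fin 3 → F) : dot x 0 = 0 := by simp [dot]

lemma dot_comm (x y : Fin 3 → F) : dot x y = dot y x := by
  simp only [dot]; ring

@[simp] lemma dot_smul_left (t : F) (x y : Fin 3 → F) : dot (t • x) y = t * dot x y := by
  simp only [dot, Pi.smul_apply, smul_eq_mul]; ring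

@[simp] lemma dot_smul_right (t : F) (x y : Fin 3 → F) : dot x (t • y) = t * dot x y := by
  simp only [dot, Pi.smul_apply, smul_eq_mul]; ring

@[simp] lemma cross_zero_left (y : Fin 3 → F) : cross 0 y = 0 := by
  ext i; fin_cases i <;> simp [cross]

@[simp] lemma cross_zero_right (x : Fin 3 → F) : cross x 0 = 0 := by
  ext i; fin_cases i <;> simp [cross]

@[simp] lemma cross_self (x : Fin 3 → F) : cross x x = 0 := by
  ext i; fin_cases i <;> simp [cross] <;> ring

@[simp] lemma cross_smul_left (t : F) (x y : Fin 3 → F) : cross (t • x) y = t • cross x y := by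
  ext i; fin_cases i <;> simp [cross] <;> ring

@[simp] lemma cross_smul_right (t : F) (x y : Fin 3 → F) : cross x (t • y) = t • cross x y := by
  ext i; fin_cases i <;> simp [cross] <;> ring

protected lemma smul_mul (t : F) (A B : Oct F) : (t • A) * B = t • (A * B) := by
  ext <;> simp <;> ring

protected lemma mul_smul (t : F) (A B : Oct F) : A * (t • B) = t • (A * B) := by
  ext <;> simp <;> ring

protected lemma smul_smul (s t : F) (A : Oct F) : s • (t • A) = (s * t) • A := by
  ext <;> simp [mul_assoc]

protected lemma one_smul (A : Oct F) : (1 : F) • A = A := by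
  ext <;> simp

protected lemma mul_one (A : Oct F) : A * 1 = A := by
  ext <;> simp

lemma mul_self_of_norm_eq_zero {Z : Oct F} (h : norm Z = 0) : Z * Z = trace Z • Z := by
  have hbc : dot Z.b Z.c = Z.a * Z.d := by rw [norm] at h; linear_combination -h
  have hcb : dot Z.c Z.b = Z.a * Z.d := by rw [dot_comm, hbc]
  ext <;> simp [trace, hbc, hcb] <;> ring

lemma pow_succ_of_norm_eq_zero {Z : Oct F} (h : norm Z = 0) (n : ℕ) :
    pow Z (n + 1) = trace Z ^ n • Z := by
  induction n with
  | zero => simp [pow, Oct.mul_one, Oct.one_smul]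
  | succ n ih =>
    rw [pow, ih, Oct.mul_smul, mul_self_of_norm_eq_zero h, Oct.smul_smul, pow_succ]

lemma pow_smul (t : F) (Z : Oct F) (n : ℕ) : pow (t • Z) n = t ^ n • pow Z n := by
  induction n with
  | zero => simp [pow, Oct.one_smul]
  | succ n ih => rw [pow, pow, ih, Oct.smul_mul, Oct.mul_smul, Oct.smul_smul, pow_succ']

lemma exists_pow_eq_of_norm_eq_zero [IsAlgClosed F] {k : ℕ} (hk : k ≠ 0) {Z : Oct F}
    (hnorm : norm Z = 0) (htr : trace Z ≠ 0) : ∃ Y : Oct F, pow Y k = Z := by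
  obtain ⟨n, rfl⟩ := Nat.exists_eq_succ_of_ne_zero hk
  obtain ⟨r, hr⟩ := IsAlgClosed.exists_pow_nat_eq (trace Z) n.succ_pos
  refine ⟨(r / trace Z) • Z, ?_⟩
  have hscale : (r / trace Z) ^ (n + 1) * trace Z ^ n = 1 := by
    rw [div_pow, hr]
    field_simp
    ring
  rw [pow_smul, pow_succ_of_norm_eq_zero hnorm, Oct.smul_smul, hscale, Oct.one_smul]

lemma exists_mul_eq_zero_and_add_ne_zero (u : F) : ∃ z : F, z * u = 0 ∧ z + u ≠ 0 := by
  by_cases hu : u = 0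
  · exact ⟨1, by simp [hu]⟩
  · exact ⟨0, by simpa using hu⟩

lemma exists_mul_eq_bottom {α : F} (hα : α ≠ 0) (y : Fin 3 → F) (ζ : F) :
    ∃ Z : Oct F, norm Z = 0 ∧ trace Z ≠ 0 ∧ (⟨0, 0, 0, α⟩ : Oct F) * Z = ⟨0, 0, y, ζ⟩ := by
  obtain ⟨z, hz, hz'⟩ := exists_mul_eq_zero_and_add_ne_zero (ζ / α)
  refine ⟨⟨z, 0, α⁻¹ • y, ζ / α⟩, by simpa [norm] using hz, hz', ?_⟩
  ext <;> simp [hα]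
  field_simp

lemma exists_mul_eq_top {β₁ : F} (hβ₁ : β₁ ≠ 0) (β₈ η : F) (x : Fin 3 → F) :
    ∃ Z : Oct F, norm Z = 0 ∧ trace Z ≠ 0 ∧
      ((⟨β₁, ![1, 0, 0], 0, β₈⟩ : Oct F) * Z).a = η ∧
      ((⟨β₁, ![1, 0, 0], 0, β₈⟩ : Oct F) * Z).b = x := by
  obtain ⟨z, hz, hz'⟩ := exists_mul_eq_zero_and_add_ne_zero (x 0)
  -- the lower-left vector is chosen orthogonal to the upper-right one, so `norm Z = z * x 0`
  refine ⟨⟨z, ![0, x 1 / β₁, x 2 / β₁], ![η - β₁ * z, x 2, -x 1], x 0⟩, ?_, hz', ?_, ?_⟩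
  · simp [norm, dot, hz]
    field_simp
    ring
  · simp [dot]
  · ext i; fin_cases i <;> simp [cross] <;> field_simp

lemma exists_decomposition {α₈ β₁ : F} (hα₈ : α₈ ≠ 0) (hβ₁ : β₁ ≠ 0) (β₈ : F) (A : Oct F) :
    ∃ Z₁ Z₂ : Oct F, norm Z₁ = 0 ∧ trace Z₁ ≠ 0 ∧ norm Z₂ = 0 ∧ trace Z₂ ≠ 0 ∧
      A = (⟨0, 0, 0, α₈⟩ : Oct F) * Z₁ + (⟨β₁, ![1, 0, 0], 0, β₈⟩ : Oct F) * Z₂ := by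
  obtain ⟨Z₂, hn₂, ht₂, ha, hb⟩ := exists_mul_eq_top hβ₁ β₈ A.a A.b
  generalize hC : (⟨β₁, ![1, 0, 0], 0, β₈⟩ : Oct F) * Z₂ = C at ha hb
  obtain ⟨Z₁, hn₁, ht₁, hDZ₁⟩ := exists_mul_eq_bottom hα₈ (A.c - C.c) (A.d - C.d)
  refine ⟨Z₁, Z₂, hn₁, ht₁, hn₂, ht₂, ?_⟩
  rw [hDZ₁, hC]
  ext <;> simp [ha, hb]

end Oct

open Oct
theorem stmt_9 {F : Type*} [Field F] [IsAlgClosed F] (β₁ α₈ β₈ : F)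
    (hβ₁ : β₁ ≠ 0) (hα₈ : α₈ ≠ 0) (k₁ k₂ : ℕ) (hk₁ : 2 ≤ k₁) (hk₂ : 2 ≤ k₂)
    (A : Oct F) :
    ∃ X Y : Oct F,
      A = (⟨0, 0, 0, α₈⟩ : Oct F) * pow X k₁
        + (⟨β₁, ![1, 0, 0], 0, β₈⟩ : Oct F) * pow Y k₂ := by
  obtain ⟨Z₁, Z₂, hn₁, ht₁, hn₂, ht₂, hA⟩ := exists_decomposition hα₈ hβ₁ β₈ A
  obtain ⟨X, rfl⟩ := exists_pow_eq_of_norm_eq_zero (by omega : k₁ ≠ 0) hn₁ ht₁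
  obtain ⟨Y, rfl⟩ := exists_pow_eq_of_norm_eq_zero (by omega : k₂ ≠ 0) hn₂ ht₂
  exact ⟨X, Y, hA⟩
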